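/- arXiv:0901.0247 — 3 statements merged into one kernel-verified Lean document; each statement's English description precedes it below -/
import Mathlib

section
/- Let m, n be non-negative integers, let τ be an (m|n)-hook partition (i.e. τ_{m+1} ≤ n), and set ν_k := τ_{m+k} for k ≥ 1. Then −Σ_{i=1}^{m} τ_i(τ_i − 2(i−1)) + Σ_{j=1}^{n} ν'_j(ν'_j + 2(m−j)) = − Σ_{i≥1} τ_i(τ_i − 2(i−1)). -/
/-- A partition: a weakly decreasing, eventually zero sequence of
non-negative integers. Here `l i` denotes the part `λ_{i+1}` (0-indexed). -/
def IsPartition (l : ℕ → ℕ) : Prop :=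
  Antitone l ∧ ∃ N, ∀ i, N ≤ i → l i = 0

/-- The conjugate partition: `conj l j` is `λ'_{j+1} = #{ i ≥ 1 : λ_i ≥ j+1 }`
(0-indexed). -/
noncomputable def conj (l : ℕ → ℕ) (j : ℕ) : ℕ :=
  Set.ncard {i : ℕ | j + 1 ≤ l i}

/-! Sum the weight `2 (r − c) − 1` over the boxes `(r, c)` of the Young diagram of `τ` below
row `m`, i.e. over the diagram of `ν` shifted down by `m` rows. Along row `r`, of length `a`, it
sums to `−a (a − 2 (r − 1))`, the terms of the right-hand side missing on the left; down column
`c`, of height `ν'_c`, it sums to `ν'_c (ν'_c + 2 (m − c))`. The identity is the exchange of the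
two orders of summation. -/

open Finset

lemma sum_range_two_mul_add (a : ℕ) (t : ℤ) :
    ∑ j ∈ range a, (2 * (j : ℤ) + t) = a * (a - 1 + t) := by
  induction a with
  | zero => simp
  | succ k ih => rw [sum_range_succ, ih]; push_cast; ring

lemma IsPartition.lt_conj_iff {ν : ℕ → ℕ} (hν : IsPartition ν) {i j : ℕ} :
    i < conj ν j ↔ j < ν i := by
  obtain ⟨hanti, N, hN⟩ := hν
  have hex : ∃ k, ν k ≤ j := ⟨N, by simp [hN N le_rfl]⟩
  have hset : {i | j + 1 ≤ ν i} = Set.Iio (Nat.find hex) := by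
    ext i
    simp only [Set.mem_ofPred_eq, Set.mem_Iio, Nat.lt_find_iff, not_le]
    exact ⟨fun h k hk => lt_of_lt_of_le h (hanti hk), fun h => h i le_rfl⟩
  rw [conj, hset, Set.ncard_Iio_nat, ← Set.mem_Iio, ← hset]
  rfl

lemma sum_rows_eq_sum_columns {M : Type*} [AddCommMonoid M] {ν : ℕ → ℕ} {N n : ℕ}
    (hanti : Antitone ν) (hN : ∀ i, N ≤ i → ν i = 0) (hn : ∀ i, ν i ≤ n) (w : ℕ → ℕ → M) :
    ∑ i ∈ range N, ∑ j ∈ range (ν i), w i j = ∑ j ∈ range n, ∑ i ∈ range (conj ν j), w i j := by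
  have hν : IsPartition ν := ⟨hanti, N, hN⟩
  refine sum_comm' fun i j => ?_
  simp only [mem_range, hν.lt_conj_iff]
  constructor
  · rintro ⟨-, hj⟩
    exact ⟨hj, hj.trans_le (hn i)⟩
  · rintro ⟨hj, -⟩
    refine ⟨not_le.mp fun hi => ?_, hj⟩
    simp [hN i hi] at hj

lemma sum_conj_mul_eq_neg_sum {ν : ℕ → ℕ} {N n : ℕ} (hanti : Antitone ν)
    (hN : ∀ i, N ≤ i → ν i = 0) (hn : ∀ i, ν i ≤ n) (m : ℤ) :
    ∑ j ∈ range n, (conj ν j : ℤ) * (conj ν j + 2 * (m - (j + 1))) =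
      -∑ k ∈ range N, (ν k : ℤ) * (ν k - 2 * (m + k)) := by
  let w : ℕ → ℕ → ℤ := fun i j => 2 * (m + i - j) - 1
  have hcolumn (j : ℕ) : ∑ i ∈ range (conj ν j), w i j =
      (conj ν j : ℤ) * (conj ν j + 2 * (m - (j + 1))) :=
    calc ∑ i ∈ range (conj ν j), w i j
        = ∑ i ∈ range (conj ν j), (2 * (i : ℤ) + (2 * (m - j) - 1)) :=
          sum_congr rfl fun i _ => by ring
      _ = (conj ν j : ℤ) * (conj ν j + 2 * (m - (j + 1))) := by
          rw [sum_range_two_mul_add]; ring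
  have hrow (k : ℕ) : ∑ j ∈ range (ν k), w k j = -((ν k : ℤ) * (ν k - 2 * (m + k))) :=
    calc ∑ j ∈ range (ν k), w k j
        = -∑ j ∈ range (ν k), (2 * (j : ℤ) + (1 - 2 * (m + k))) := by
          rw [← sum_neg_distrib]; exact sum_congr rfl fun j _ => by ring
      _ = -((ν k : ℤ) * (ν k - 2 * (m + k))) := by
          rw [sum_range_two_mul_add]; ring
  simp_rw [← hcolumn, ← sum_rows_eq_sum_columns hanti hN hn w, hrow, sum_neg_distrib]

/-- For τ an (m|n)-hook partition and ν_k := τ_{m+k}: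
−Σ_{i=1}^{m} τ_i(τ_i − 2(i−1)) + Σ_{j=1}^{n} ν'_j(ν'_j + 2(m−j))
  = − Σ_{i≥1} τ_i(τ_i − 2(i−1)). -/
theorem hook_partition_identity (m n : ℕ) (l : ℕ → ℕ) (hl : IsPartition l)
    (hhook : l m ≤ n) :
    - ∑ i ∈ Finset.range m, (l i : ℤ) * ((l i : ℤ) - 2 * (i : ℤ)) +
      ∑ j ∈ Finset.range n,
        (conj (fun k => l (m + k)) j : ℤ) *
          ((conj (fun k => l (m + k)) j : ℤ) + 2 * ((m : ℤ) - ((j : ℤ) + 1))) =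
      - ∑ᶠ i : ℕ, (l i : ℤ) * ((l i : ℤ) - 2 * (i : ℤ)) := by
  obtain ⟨hanti, N, hN⟩ := hl
  have hsupp : (Function.support fun i => (l i : ℤ) * ((l i : ℤ) - 2 * (i : ℤ))) ⊆
      (range (m + N) : Set ℕ) := by
    intro i hi
    by_contra hiN
    simp [hN i (by simp at hiN; omega)] at hi
  rw [finsum_eq_sum_of_support_subset _ hsupp, sum_range_add,
    sum_conj_mul_eq_neg_sum (N := N) (fun _ _ hab => hanti (by omega))
      (fun k hk => hN _ (by omega)) (fun k => (hanti (by omega)).trans hhook)]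
  push_cast
  ring
end

section
/- Let p, q be non-negative integers and let ζ = (ζ_0, ζ_1, ζ_2, …) be a weakly decreasing, eventually zero sequence of non-negative integers (indexed from 0) with ζ_q ≤ p. Set χ_k := ζ_{q+k−1} for k ≥ 1. Then Σ_{j=0}^{q−1} ζ_j(ζ_j − 2j) − Σ_{k=1}^{p} χ'_k(χ'_k + 2(q−k)) = Σ_{j≥0} ζ_j(ζ_j − 2j). -/
open Finset

theorem sum_range_add_two_mul {R : Type*} [CommRing R] (c : ℕ) (b : R) :
    ∑ i ∈ range c, (b + 2 * i) = c * (b + c - 1) := by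
  induction c with
  | zero => simp
  | succ n ih => rw [sum_range_succ, ih]; push_cast; ring

theorem sum_range_sub_two_mul_add_one {R : Type*} [CommRing R] (m : ℕ) (a : R) :
    ∑ k ∈ range m, (a - (2 * k + 1)) = m * (a - m) := by
  induction m with
  | zero => simp
  | succ n ih => rw [sum_range_succ, ih]; push_cast; ring

namespace IsPartition

variable {l : ℕ → ℕ}

theorem comp_add_left (hl : IsPartition l) (q : ℕ) : IsPartition fun i => l (q + i) := by
  obtain ⟨hanti, N, hN⟩ := hl
  exact ⟨fun a b hab => hanti (by omega), N, fun i hi => hN _ (by omega)⟩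

theorem lt_conj_iff_s3 (hl : IsPartition l) {i k : ℕ} : i < conj l k ↔ k < l i := by
  obtain ⟨hanti, N, hN⟩ := hl
  have hex : ∃ i, l i ≤ k := ⟨N, by simp [hN N le_rfl]⟩
  have hset : {i | k + 1 ≤ l i} = Set.Iio (Nat.find hex) := by
    ext i
    simp only [Set.mem_ofPred_eq, Set.mem_Iio, Nat.lt_find_iff, not_le, Nat.add_one_le_iff]
    exact ⟨fun h m hm => h.trans_le (hanti hm), fun h => h i le_rfl⟩
  rw [conj, hset, Set.ncard_Iio_nat, Nat.lt_find_iff]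
  exact ⟨fun h => not_le.1 (h i le_rfl), fun h m hm => not_le.2 (h.trans_le (hanti hm))⟩

theorem sum_cells_by_columns_eq_by_rows {M : Type*} [AddCommMonoid M] (hl : IsPartition l)
    {N p : ℕ} (hN : ∀ i, N ≤ i → l i = 0) (hp : l 0 ≤ p) (w : ℕ → ℕ → M) :
    ∑ k ∈ range p, ∑ i ∈ range (conj l k), w i k = ∑ i ∈ range N, ∑ k ∈ range (l i), w i k := by
  refine sum_comm' fun k i => ?_
  simp only [mem_range, hl.lt_conj_iff_s3]
  have hlp : l i ≤ p := (hl.1 (Nat.zero_le i)).trans hp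
  have hiN : k < l i → i < N := fun h => by_contra fun hi => by simp [hN i (by omega)] at h
  constructor
  · exact fun ⟨_, h⟩ => ⟨h, hiN h⟩
  · exact fun ⟨h, _⟩ => ⟨by omega, h⟩

end IsPartition

/-- For ζ = (ζ_0, ζ_1, …) weakly decreasing eventually zero with ζ_q ≤ p,
and χ_k := ζ_{q+k−1}:
Σ_{j=0}^{q−1} ζ_j(ζ_j − 2j) − Σ_{k=1}^{p} χ'_k(χ'_k + 2(q−k))
  = Σ_{j≥0} ζ_j(ζ_j − 2j). -/
theorem negative_direction_identity (p q : ℕ) (zeta : ℕ → ℕ)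
    (hz : IsPartition zeta) (hq : zeta q ≤ p) :
    ∑ j ∈ Finset.range q, (zeta j : ℤ) * ((zeta j : ℤ) - 2 * (j : ℤ)) -
      ∑ k ∈ Finset.range p,
        (conj (fun i => zeta (q + i)) k : ℤ) *
          ((conj (fun i => zeta (q + i)) k : ℤ) + 2 * ((q : ℤ) - ((k : ℤ) + 1))) =
      ∑ᶠ j : ℕ, (zeta j : ℤ) * ((zeta j : ℤ) - 2 * (j : ℤ)) := by
  obtain ⟨N, hN⟩ := hz.2
  set χ : ℕ → ℕ := fun i => zeta (q + i)
  have cells : ∑ k ∈ range p, (conj χ k : ℤ) * ((conj χ k : ℤ) + 2 * ((q : ℤ) - ((k : ℤ) + 1))) =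
      ∑ i ∈ range N, (χ i : ℤ) * (2 * ((q : ℤ) + i) - χ i) := by
    calc _ = ∑ k ∈ range p, ∑ i ∈ range (conj χ k), (2 * ((q : ℤ) + i) - (2 * k + 1)) := by
          refine sum_congr rfl fun k _ => ?_
          have summand (i : ℕ) : 2 * ((q : ℤ) + i) - (2 * k + 1) = (2 * q - 2 * k - 1) + 2 * i := by
            ring
          simp only [summand, sum_range_add_two_mul]
          ring
      _ = ∑ i ∈ range N, ∑ k ∈ range (χ i), (2 * ((q : ℤ) + i) - (2 * k + 1)) :=
          (hz.comp_add_left q).sum_cells_by_columns_eq_by_rows (fun i hi => hN _ (by omega)) hq _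
      _ = _ := sum_congr rfl fun i _ => by rw [sum_range_sub_two_mul_add_one]
  have support : Function.support (fun j : ℕ => (zeta j : ℤ) * ((zeta j : ℤ) - 2 * (j : ℤ))) ⊆
      ↑(range (q + N)) := fun j hj => by
    by_contra hjN
    simp_all [hN j (by simp at hjN; omega)]
  rw [finsum_eq_sum_of_support_subset _ support, sum_range_add, cells, sub_eq_add_neg,
    ← sum_neg_distrib]
  congr 1
  exact sum_congr rfl fun i _ => by push_cast; ring
end

section
/- Let m, n, p, q be non-negative integers. Let η be an (n|m)-hook partition (η_{n+1} ≤ m), set τ := η' and ν_k := τ_{m+k} for k ≥ 1. Let ζ = (ζ_0, ζ_1, …) be a weakly decreasing, eventually zero sequence of non-negative integers with ζ_q ≤ p, and set χ_k := ζ_{q+k−1} for k ≥ 1. Then −Σ_{i=1}^{m} τ_i(τ_i − 2(i−1)) + Σ_{j=1}^{n} ν'_j(ν'_j + 2(m−j)) + Σ_{j=0}^{q−1} ζ_j(ζ_j − 2j) − Σ_{k=1}^{p} χ'_k(χ'_k + 2(q−k)) = Σ_{i≥1} η_i(η_i − 2i) + Σ_{j≥0} ζ_j(ζ_j − 2j).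 -/
/-!
Let `W_a(μ) = ∑ₖ μₖ (μₖ - 2(k + a))`, which is `casimirSum a μ` (rows indexed from 0). Counting
the cells `(i, j)` of the Young diagram of `μ` with weight `1` and with weight `2i + 1`, row by row
and column by column, gives `|μ| = |μ'|` and `∑ⱼ μ'ⱼ² = ∑ᵢ (2i + 1) μᵢ`; with the same identity for
`μ'` this yields `W_a(μ) + W_{1-a}(μ') = 0`. Splitting after `m` rows gives
`W_0(τ) = ∑_{i<m} τᵢ(τᵢ - 2i) + W_m(ν)`, and likewise `W_0(ζ) = ∑_{j<q} ζⱼ(ζⱼ - 2j) + W_q(χ)`.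
The hook conditions, in the form `ν₀ ≤ n` and `χ₀ ≤ p`, make the truncated sums over `ν'` and
`χ'` equal to `W_{1-m}(ν')` and `W_{1-q}(χ')`, so the identity for `τ`, `ν` and `χ` gives the theorem.
-/

open Finset

noncomputable def casimirSum (a : ℤ) (μ : ℕ → ℕ) : ℤ :=
  ∑ᶠ k : ℕ, (μ k : ℤ) * ((μ k : ℤ) - 2 * ((k : ℤ) + a))

section Conj

variable {μ : ℕ → ℕ} {N : ℕ}

lemma setOf_add_one_le_subset_range (hN : ∀ i, N ≤ i → μ i = 0) (j : ℕ) :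
    {i | j + 1 ≤ μ i} ⊆ (range N : Set ℕ) := by
  intro i (hi : j + 1 ≤ μ i)
  rw [coe_range, Set.mem_Iio]
  by_contra! hiN
  rw [hN i hiN] at hi
  omega

lemma conj_le (hN : ∀ i, N ≤ i → μ i = 0) (j : ℕ) : conj μ j ≤ N := by
  have := Set.ncard_le_ncard (setOf_add_one_le_subset_range hN j) (range N).finite_toSet
  rwa [Set.ncard_coe_finset, card_range] at this

lemma conj_eq_zero (hμ : Antitone μ) {j : ℕ} (hj : μ 0 ≤ j) : conj μ j = 0 := by
  have : {i | j + 1 ≤ μ i} = ∅ := Set.eq_empty_of_forall_notMem fun i (hi : j + 1 ≤ μ i) => by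
    have := (hμ i.zero_le).trans hj
    omega
  rw [conj, this, Set.ncard_empty]

lemma conj_antitone (hN : ∀ i, N ≤ i → μ i = 0) : Antitone (conj μ) := fun j j' hjj' =>
  Set.ncard_le_ncard (fun i (hi : j' + 1 ≤ μ i) => show j + 1 ≤ μ i by omega)
    ((range N).finite_toSet.subset (setOf_add_one_le_subset_range hN j))

lemma lt_conj_iff (hμ : Antitone μ) (hN : ∀ i, N ≤ i → μ i = 0) {i j : ℕ} :
    i < conj μ j ↔ j < μ i := by
  constructor
  · intro hi
    by_contra! hij
    have hsub : {i' | j + 1 ≤ μ i'} ⊆ (range i : Set ℕ) := fun i' (hi' : j + 1 ≤ μ i') =>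
      mem_coe.2 (mem_range.2 (not_le.1 fun h => by have := hμ h; omega))
    have := Set.ncard_le_ncard hsub
    rw [Set.ncard_coe_finset, card_range] at this
    exact hi.not_ge this
  · intro hij
    have hsub : (range (i + 1) : Set ℕ) ⊆ {i' | j + 1 ≤ μ i'} := fun i' hi' =>
      show j + 1 ≤ μ i' from hij.trans_le (hμ (Nat.lt_succ_iff.1 (mem_range.1 hi')))
    have := Set.ncard_le_ncard hsub
      ((range N).finite_toSet.subset (setOf_add_one_le_subset_range hN j))
    rwa [Set.ncard_coe_finset, card_range] at this

lemma conj_conj (hμ : Antitone μ) (hN : ∀ i, N ≤ i → μ i = 0) : conj (conj μ) = μ := by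
  ext j
  have : {i | j + 1 ≤ conj μ i} = (range (μ j) : Set ℕ) := by
    ext i
    simpa [Nat.add_one_le_iff] using lt_conj_iff hμ hN
  rw [conj, this, Set.ncard_coe_finset, card_range]

lemma sum_range_sum_range_conj {β : Type*} [AddCommMonoid β] (hμ : Antitone μ)
    (hN : ∀ i, N ≤ i → μ i = 0) {M : ℕ} (hM : μ 0 ≤ M) (f : ℕ → β) :
    ∑ j ∈ range M, ∑ i ∈ range (conj μ j), f i = ∑ i ∈ range N, μ i • f i := by
  have hcells : ∀ i j, i ∈ range N ∧ j ∈ range (μ i) ↔ i ∈ range (conj μ j) ∧ j ∈ range M := by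
    intro i j
    simp only [mem_range, lt_conj_iff hμ hN]
    constructor
    · rintro ⟨-, hj⟩
      exact ⟨hj, hj.trans_le ((hμ i.zero_le).trans hM)⟩
    · rintro ⟨hj, -⟩
      refine ⟨not_le.1 fun hi => ?_, hj⟩
      rw [hN i hi] at hj
      exact j.not_lt_zero hj
  rw [← sum_comm' hcells]
  simp

end Conj

lemma sum_range_two_mul_add_one (t : ℕ) : ∑ i ∈ range t, (2 * (i : ℤ) + 1) = (t : ℤ) ^ 2 := by
  induction t with
  | zero => simp
  | succ t ih => rw [sum_range_succ, ih]; push_cast; ring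

namespace IsPartition

variable {μ : ℕ → ℕ}

lemma conj (hμ : IsPartition μ) : IsPartition (_root_.conj μ) := by
  obtain ⟨hanti, N, hN⟩ := hμ
  exact ⟨conj_antitone hN, μ 0, fun j hj => conj_eq_zero hanti hj⟩

lemma shift (hμ : IsPartition μ) (s : ℕ) : IsPartition (fun k => μ (s + k)) := by
  obtain ⟨hanti, N, hN⟩ := hμ
  exact ⟨hanti.comp_monotone fun _ _ h => Nat.add_le_add_left h s, N, fun k hk => hN _ (by omega)⟩

end IsPartition

section CasimirSum

variable {μ : ℕ → ℕ} {N : ℕ}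

lemma casimirSum_eq_sum_range (hN : ∀ i, N ≤ i → μ i = 0) (a : ℤ) :
    casimirSum a μ = ∑ k ∈ range N, (μ k : ℤ) * ((μ k : ℤ) - 2 * ((k : ℤ) + a)) := by
  refine finsum_eq_sum_of_support_subset _ fun k hk => ?_
  rw [coe_range, Set.mem_Iio]
  by_contra! hkN
  exact hk (by simp [hN k hkN])

lemma casimirSum_eq_sum_range_add_shift (hμ : IsPartition μ) (a : ℤ) (s : ℕ) :
    casimirSum a μ = ∑ k ∈ range s, (μ k : ℤ) * ((μ k : ℤ) - 2 * ((k : ℤ) + a)) +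
      casimirSum (a + s) (fun k => μ (s + k)) := by
  obtain ⟨-, N, hN⟩ := hμ
  rw [casimirSum_eq_sum_range (N := s + N) (fun i hi => hN i (by omega)),
    casimirSum_eq_sum_range (N := N) (fun i hi => hN _ (by omega)), sum_range_add]
  congr 1
  exact sum_congr rfl fun k _ => by push_cast; ring

lemma casimirSum_conj_eq_sum_range (hμ : Antitone μ) {M : ℕ} (hM : μ 0 ≤ M) (a : ℤ) :
    casimirSum (1 - a) (conj μ) =
      ∑ j ∈ range M, (conj μ j : ℤ) * ((conj μ j : ℤ) + 2 * (a - ((j : ℤ) + 1))) := by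
  rw [casimirSum_eq_sum_range fun j hj => conj_eq_zero hμ (hM.trans hj)]
  exact sum_congr rfl fun j _ => by ring

lemma casimirSum_eq_sum_sq_sub_sum_mul_add (hN : ∀ i, N ≤ i → μ i = 0) (a : ℤ) :
    casimirSum a μ = ∑ k ∈ range N, (μ k : ℤ) ^ 2 - ∑ k ∈ range N, (μ k : ℤ) * (2 * k + 1) +
      (1 - 2 * a) * ∑ k ∈ range N, (μ k : ℤ) := by
  rw [casimirSum_eq_sum_range hN, mul_sum, ← sum_sub_distrib, ← sum_add_distrib]
  exact sum_congr rfl fun k _ => by ring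

theorem casimirSum_add_casimirSum_conj (hμ : IsPartition μ) (a : ℤ) :
    casimirSum a μ + casimirSum (1 - a) (conj μ) = 0 := by
  obtain ⟨hanti, N, hN⟩ := hμ
  have hN' : ∀ j, μ 0 ≤ j → conj μ j = 0 := fun j hj => conj_eq_zero hanti hj
  have size := sum_range_sum_range_conj hanti hN le_rfl (fun _ => (1 : ℤ))
  have rows := sum_range_sum_range_conj hanti hN le_rfl (fun i => 2 * (i : ℤ) + 1)
  have cols := sum_range_sum_range_conj (conj_antitone hN) hN' (conj_le hN 0)
    (fun i => 2 * (i : ℤ) + 1)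
  simp only [conj_conj hanti hN, sum_range_two_mul_add_one, sum_const, card_range, nsmul_eq_mul,
    mul_one] at size rows cols
  rw [casimirSum_eq_sum_sq_sub_sum_mul_add hN, casimirSum_eq_sum_sq_sub_sum_mul_add hN']
  linear_combination cols + rows + (2 * a - 1) * size

end CasimirSum

/-- Lemma 4.1 of the paper, in explicit combinatorial form.
Let η be an (n|m)-hook partition, τ := η', ν_k := τ_{m+k};
let ζ be weakly decreasing eventually zero with ζ_q ≤ p, χ_k := ζ_{q+k−1}.
Then
−Σ_{i=1}^{m} τ_i(τ_i − 2(i−1)) + Σ_{j=1}^{n} ν'_j(ν'_j + 2(m−j))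
 + Σ_{j=0}^{q−1} ζ_j(ζ_j − 2j) − Σ_{k=1}^{p} χ'_k(χ'_k + 2(q−k))
 = Σ_{i≥1} η_i(η_i − 2i) + Σ_{j≥0} ζ_j(ζ_j − 2j). -/
theorem casimir_comparison_glInfinity (m n p q : ℕ)
    (eta : ℕ → ℕ) (heta : IsPartition eta) (hetahook : eta n ≤ m)
    (zeta : ℕ → ℕ) (hzeta : IsPartition zeta) (hzetahook : zeta q ≤ p) :
    - ∑ i ∈ Finset.range m,
        (conj eta i : ℤ) * ((conj eta i : ℤ) - 2 * (i : ℤ)) +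
      ∑ j ∈ Finset.range n,
        (conj (fun k => conj eta (m + k)) j : ℤ) *
          ((conj (fun k => conj eta (m + k)) j : ℤ) + 2 * ((m : ℤ) - ((j : ℤ) + 1))) +
      ∑ j ∈ Finset.range q, (zeta j : ℤ) * ((zeta j : ℤ) - 2 * (j : ℤ)) -
      ∑ k ∈ Finset.range p,
        (conj (fun i => zeta (q + i)) k : ℤ) *
          ((conj (fun i => zeta (q + i)) k : ℤ) + 2 * ((q : ℤ) - ((k : ℤ) + 1))) =
      (∑ᶠ i : ℕ, (eta i : ℤ) * ((eta i : ℤ) - 2 * ((i : ℤ) + 1))) +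
      ∑ᶠ j : ℕ, (zeta j : ℤ) * ((zeta j : ℤ) - 2 * (j : ℤ)) := by
  have hτ := heta.conj
  obtain ⟨hanti, N, hN⟩ := heta
  have hν₀ : conj eta m ≤ n := not_lt.1 fun h => ((lt_conj_iff hanti hN).1 h).not_ge hetahook
  have key_η := casimirSum_add_casimirSum_conj hτ 0
  have key_ν := casimirSum_add_casimirSum_conj (hτ.shift m) m
  have key_χ := casimirSum_add_casimirSum_conj (hzeta.shift q) q
  rw [casimirSum_conj_eq_sum_range (hτ.shift m).1 hν₀] at key_ν
  rw [casimirSum_conj_eq_sum_range (hzeta.shift q).1 hzetahook] at key_χ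
  rw [sub_zero, conj_conj hanti hN, casimirSum_eq_sum_range_add_shift hτ 0 m] at key_η
  have split_ζ := casimirSum_eq_sum_range_add_shift hzeta 0 q
  simp only [add_zero, zero_add] at key_η split_ζ
  change _ = casimirSum 1 eta + _
  rw [show ∑ᶠ j : ℕ, (zeta j : ℤ) * ((zeta j : ℤ) - 2 * (j : ℤ)) = casimirSum 0 zeta by
    simp only [casimirSum, add_zero]]
  linear_combination key_ν - key_η - key_χ - split_ζ
end
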